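/- arXiv:2206.00848 — 7 statements merged into one kernel-verified Lean document; each statement's English description precedes it below -/
import Mathlib

section
/- Let G be a group with left-invariant total order < with positive cone P = {g : 1 < g}, and let C be a subgroup of G. If P \ C is a union of left C-cosets (i.e., g ∈ P \ C and c ∈ C imply gc ∈ P \ C), then C is convex with respect to <. -/
/-!
If `g ∉ C` lies below some `c ∈ C`, then `g⁻¹ * c` is positive and outside `C`, so by hypothesis
its right translates `g⁻¹ * c * (c⁻¹ * c') = g⁻¹ * c'` by `C` stay positive: `g` lies below all
of `C`. Hence nothing outside `C` can lie strictly between two elements of `C`.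
-/

def IsConvexSubgroup {G : Type*} [Group G] [LinearOrder G] (C : Subgroup G) : Prop :=
  ∀ c₁ ∈ C, ∀ c₂ ∈ C, ∀ g : G, c₁ < g → g < c₂ → g ∈ C

theorem lt_of_notMem_of_lt_mem {G : Type*} [Group G] [LinearOrder G]
    [CovariantClass G G (· * ·) (· < ·)] {C : Subgroup G}
    (h : ∀ g : G, 1 < g → g ∉ C → ∀ c ∈ C, 1 < g * c)
    {g c c' : G} (hg : g ∉ C) (hc : c ∈ C) (hc' : c' ∈ C) (hgc : g < c) : g < c' := by
  have hpos : 1 < g⁻¹ * c := lt_inv_mul_iff_lt.mpr hgc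
  have hout : g⁻¹ * c ∉ C := fun hmem => hg <| by
    simpa using C.mul_mem hc (C.inv_mem hmem)
  have hshift : 1 < g⁻¹ * c * (c⁻¹ * c') :=
    h _ hpos hout _ (C.mul_mem (C.inv_mem hc) hc')
  rwa [mul_assoc, mul_inv_cancel_left, lt_inv_mul_iff_lt] at hshift

/-- If `P \ C` is a union of left `C`-cosets, where `P = {g : 1 < g}` is the positive
cone of a left-order, then `C` is convex with respect to that order. -/
theorem convex_of_pos_cone_diff_union_left_cosets {G : Type*} [Group G] [LinearOrder G]
    [CovariantClass G G (· * ·) (· < ·)] (C : Subgroup G)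
    (h : ∀ g : G, 1 < g → g ∉ C → ∀ c ∈ C, 1 < g * c ∧ g * c ∉ C) :
    IsConvexSubgroup C := by
  intro c₁ hc₁ c₂ hc₂ g hc₁g hgc₂
  by_contra hg
  exact (lt_of_notMem_of_lt_mem (fun x hx hxC d hd => (h x hx hxC d hd).1) hg hc₂ hc₁ hgc₂).not_gt hc₁g
end

section
/- Convex swap preserves positive cones: let (G, <₁) be a left-ordered group with positive cone P₁ and C a convex subgroup of G. If <₂ is another left-order on G with positive cone P₂ satisfying P₁ \ C = P₂ \ C, then C is convex with respect to <₂. -/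
/-- `P` is the positive cone of a left-order on `G`: a subsemigroup with
`G = P ⊔ {1} ⊔ P⁻¹`. -/
def IsLeftOrderCone {G : Type*} [Group G] (P : Set G) : Prop :=
  (∀ a ∈ P, ∀ b ∈ P, a * b ∈ P) ∧ (1 : G) ∉ P ∧ ∀ g : G, g ≠ 1 → (g ∈ P ↔ g⁻¹ ∉ P)

/-- `C` is convex with respect to the left-order with positive cone `P`
(the order `g < h ↔ g⁻¹ * h ∈ P`). -/
def IsConeConvex {G : Type*} [Group G] (P : Set G) (C : Subgroup G) : Prop :=
  ∀ c₁ ∈ C, ∀ c₂ ∈ C, ∀ g : G, c₁⁻¹ * g ∈ P → g⁻¹ * c₂ ∈ P → g ∈ C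

theorem isConeConvex_iff_diff {G : Type*} [Group G] {P : Set G} {C : Subgroup G} :
    IsConeConvex P C ↔ IsConeConvex (P \ C) C := by
  constructor
  · intro hconv c₁ hc₁ c₂ hc₂ g hg₁ hg₂
    exact hconv c₁ hc₁ c₂ hc₂ g hg₁.1 hg₂.1
  · intro hconv c₁ hc₁ c₂ hc₂ g hg₁ hg₂
    by_contra hg
    have hg₁C : c₁⁻¹ * g ∉ C := by rwa [C.mul_mem_cancel_left (C.inv_mem hc₁)]
    have hg₂C : g⁻¹ * c₂ ∉ C := by rwa [C.mul_mem_cancel_right hc₂, C.inv_mem_iff]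
    exact hg (hconv c₁ hc₁ c₂ hc₂ g ⟨hg₁, hg₁C⟩ ⟨hg₂, hg₂C⟩)

theorem convex_swap_preserves_convexity_general {G : Type*} [Group G] (P₁ P₂ : Set G)
    (C : Subgroup G)
    (hconv : IsConeConvex P₁ C) (hswap : P₁ \ (C : Set G) = P₂ \ (C : Set G)) :
    IsConeConvex P₂ C := by
  rw [isConeConvex_iff_diff, ← hswap]
  exact isConeConvex_iff_diff.mp hconv

/-- Convex swap preserves convexity: if `C` is convex for the order with cone `P₁`
and `P₂` is another left-order cone with `P₁ \ C = P₂ \ C`, then `C` is convex for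
the order with cone `P₂`. -/
theorem convex_swap_preserves_convexity {G : Type*} [Group G] (P₁ P₂ : Set G)
    (C : Subgroup G) (h₁ : IsLeftOrderCone P₁) (h₂ : IsLeftOrderCone P₂)
    (hconv : IsConeConvex P₁ C) (hswap : P₁ \ (C : Set G) = P₂ \ (C : Set G)) :
    IsConeConvex P₂ C :=
  convex_swap_preserves_convexity_general P₁ P₂ C hconv hswap
end

section
/- Replacing the order on a convex subgroup yields a left-order: let G be a group with a left-order having positive cone P₁, let C be a convex subgroup, and let P₀ ⊆ C be the positive cone of a left-order on C (so C = P₀ ⊔ {1} ⊔ P₀⁻¹ and P₀ is a subsemigroup). Then S = P₀ ∪ (P₁ \ C) satisfies G = S ⊔ {1} ⊔ S⁻¹ and S is closed under multiplication; hence S is the positive cone of a left-order on G. -/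
namespace Set

variable {α : Type*} {s t u : Set α} {x : α}

theorem mem_union_diff_iff_of_mem (hx : x ∈ u) : x ∈ s ∪ (t \ u) ↔ x ∈ s := by
  simp [hx]

theorem mem_union_diff_iff_of_notMem (hsu : s ⊆ u) (hx : x ∉ u) : x ∈ s ∪ (t \ u) ↔ x ∈ t := by
  simp only [mem_union, mem_sdiff, hx, not_false_eq_true, and_true, or_iff_right_iff_imp]
  exact fun hs => absurd (hsu hs) hx

end Set

namespace IsLeftOrderCone

variable {G : Type*} [Group G] {P : Set G}

theorem inv_mem_of_notMem (hP : IsLeftOrderCone P) {g : G} (hg : g ≠ 1) (h : g ∉ P) :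
    g⁻¹ ∈ P :=
  not_not.mp fun h' => h ((hP.2.2 g hg).mpr h')

end IsLeftOrderCone

namespace IsConeConvex

variable {G : Type*} [Group G] {P : Set G} {C : Subgroup G}

theorem mem_of_mul_mem (hC : IsConeConvex P C) {a b : G} (ha : a ∈ P) (hb : b ∈ P)
    (hab : a * b ∈ C) : a ∈ C :=
  hC 1 C.one_mem (a * b) hab a (by simpa using ha) (by simpa using hb)

theorem mul_mem_of_mem_left (hC : IsConeConvex P C) (hP : IsLeftOrderCone P) {c g : G}
    (hc : c ∈ C) (hg : g ∈ P) (hgC : g ∉ C) : c * g ∈ P := by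
  by_contra h
  have hcgC : c * g ∉ C := (C.mul_mem_cancel_left hc).not.mpr hgC
  have hinv : g⁻¹ * c⁻¹ ∈ P := by
    simpa using hP.inv_mem_of_notMem (ne_of_mem_of_not_mem C.one_mem hcgC).symm h
  exact hgC (hC 1 C.one_mem c⁻¹ (C.inv_mem hc) g (by simpa using hg) hinv)

theorem mul_mem_of_mem_right (hC : IsConeConvex P C) (hP : IsLeftOrderCone P) {c g : G}
    (hc : c ∈ C) (hg : g ∈ P) (hgC : g ∉ C) : g * c ∈ P := by
  by_contra h
  have hgcC : g * c ∉ C := (C.mul_mem_cancel_right hc).not.mpr hgC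
  have hinv : c⁻¹ * g⁻¹ ∈ P := by
    simpa using hP.inv_mem_of_notMem (ne_of_mem_of_not_mem C.one_mem hgcC).symm h
  exact hgC (C.inv_mem_iff.mp (hC c hc 1 C.one_mem g⁻¹ hinv (by simpa using hg)))

end IsConeConvex

section ConvexSwap

variable {G : Type*} [Group G] {P₁ P₀ : Set G} {C : Subgroup G}

open Set in
theorem union_diff_mul_mem (h₁ : IsLeftOrderCone P₁) (hconv : IsConeConvex P₁ C)
    (hP₀C : P₀ ⊆ (C : Set G)) (hP₀mul : ∀ a ∈ P₀, ∀ b ∈ P₀, a * b ∈ P₀) {a b : G}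
    (ha : a ∈ P₀ ∪ (P₁ \ (C : Set G))) (hb : b ∈ P₀ ∪ (P₁ \ (C : Set G))) :
    a * b ∈ P₀ ∪ (P₁ \ (C : Set G)) := by
  by_cases haC : a ∈ C <;> by_cases hbC : b ∈ C
  · rw [mem_union_diff_iff_of_mem haC] at ha
    rw [mem_union_diff_iff_of_mem hbC] at hb
    exact Or.inl (hP₀mul a ha b hb)
  · rw [mem_union_diff_iff_of_notMem hP₀C hbC] at hb
    rw [mem_union_diff_iff_of_notMem hP₀C ((C.mul_mem_cancel_left haC).not.mpr hbC)]
    exact hconv.mul_mem_of_mem_left h₁ haC hb hbC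
  · rw [mem_union_diff_iff_of_notMem hP₀C haC] at ha
    rw [mem_union_diff_iff_of_notMem hP₀C ((C.mul_mem_cancel_right hbC).not.mpr haC)]
    exact hconv.mul_mem_of_mem_right h₁ hbC ha haC
  · rw [mem_union_diff_iff_of_notMem hP₀C haC] at ha
    rw [mem_union_diff_iff_of_notMem hP₀C hbC] at hb
    exact Or.inr ⟨h₁.1 a ha b hb, fun hab => haC (hconv.mem_of_mul_mem ha hb hab)⟩

end ConvexSwap

/-- Replacing the order on a convex subgroup yields a left-order: if `P₁` is the cone
of a left-order on `G`, `C` is convex with respect to it, and `P₀ ⊆ C` is the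
positive cone of a left-order on `C`, then `P₀ ∪ (P₁ \ C)` is the positive cone of
a left-order on `G`. -/
theorem cone_of_convex_swap {G : Type*} [Group G] (P₁ P₀ : Set G) (C : Subgroup G)
    (h₁ : IsLeftOrderCone P₁) (hconv : IsConeConvex P₁ C) (hP₀C : P₀ ⊆ (C : Set G))
    (hP₀mul : ∀ a ∈ P₀, ∀ b ∈ P₀, a * b ∈ P₀) (hP₀one : (1 : G) ∉ P₀)
    (hP₀part : ∀ c ∈ C, c ≠ (1 : G) → (c ∈ P₀ ↔ c⁻¹ ∉ P₀)) :
    IsLeftOrderCone (P₀ ∪ (P₁ \ (C : Set G))) := by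
  refine ⟨fun a ha b hb => union_diff_mul_mem h₁ hconv hP₀C hP₀mul ha hb, ?_, fun g hg => ?_⟩
  · rw [Set.mem_union_diff_iff_of_mem C.one_mem]
    exact hP₀one
  by_cases hgC : g ∈ C
  · rw [Set.mem_union_diff_iff_of_mem hgC, Set.mem_union_diff_iff_of_mem (C.inv_mem hgC)]
    exact hP₀part g hgC hg
  · rw [Set.mem_union_diff_iff_of_notMem hP₀C hgC,
      Set.mem_union_diff_iff_of_notMem hP₀C (C.inv_mem_iff.not.mpr hgC)]
    exact h₁.2.2 g hg
end

section
/- Order extension from a point stabilizer: suppose a nontrivial group G acts by order-preserving bijections on a linearly ordered set (E, <ₑ), x ∈ E, and <₀ is a left-invariant total order on the stabilizer Stab(x). Then the relation g₁ < g₂ defined by: (1 <₀ g₁⁻¹g₂ when g₁⁻¹g₂ ∈ Stab(x)) and (g₁·x <ₑ g₂·x when g₁⁻¹g₂ ∉ Stab(x)), is a left-invariant total order on G, and Stab(x) is convex with respect to it. -/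
/-! The relation is lexicographic: first compare `g₁ • x` and `g₂ • x` in `E`, and only when
they agree, i.e. when `g₁⁻¹ * g₂` fixes `x`, compare `1` with `g₁⁻¹ * g₂` in `Stab(x)`.
Left invariance of both ingredients makes it left-invariant, and every `g` lying between two
elements of `Stab(x)` must satisfy `x ≤ g • x ≤ x`. -/

open MulAction

section LeftInvariant

variable {H : Type*} [Group H] {r : H → H → Prop}

theorem one_rel_mul [IsTrans H r] (hr : ∀ k a b, r a b → r (k * a) (k * b)) {a b : H}
    (ha : r 1 a) (hb : r 1 b) : r 1 (a * b) :=
  _root_.trans ha (by simpa using hr a 1 b hb)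

theorem one_rel_inv_of_rel_one (hr : ∀ k a b, r a b → r (k * a) (k * b)) {a : H} (ha : r a 1) :
    r 1 a⁻¹ := by
  simpa using hr a⁻¹ a 1 ha

end LeftInvariant

section StabilizerLex

variable {G E : Type*} [Group G] [MulAction G E] {x : E}

theorem inv_mul_mem_stabilizer_iff {g₁ g₂ : G} :
    g₁⁻¹ * g₂ ∈ stabilizer G x ↔ g₁ • x = g₂ • x := by
  rw [mem_stabilizer_iff, mul_smul, inv_smul_eq_iff, eq_comm]

variable [LinearOrder E]

variable (x) in
def stabilizerLex (r₀ : stabilizer G x → stabilizer G x → Prop) (g₁ g₂ : G) : Prop :=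
  (∃ h : g₁⁻¹ * g₂ ∈ stabilizer G x, r₀ 1 ⟨g₁⁻¹ * g₂, h⟩) ∨
    (g₁⁻¹ * g₂ ∉ stabilizer G x ∧ g₁ • x < g₂ • x)

variable {r₀ : stabilizer G x → stabilizer G x → Prop} {g₁ g₂ g₃ : G}

theorem stabilizerLex_of_smul_lt (h : g₁ • x < g₂ • x) : stabilizerLex x r₀ g₁ g₂ :=
  .inr ⟨fun hm => h.ne (inv_mul_mem_stabilizer_iff.mp hm), h⟩

theorem stabilizerLex_iff_of_mem (hm : g₁⁻¹ * g₂ ∈ stabilizer G x) :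
    stabilizerLex x r₀ g₁ g₂ ↔ r₀ 1 ⟨g₁⁻¹ * g₂, hm⟩ := by
  simp [stabilizerLex, hm]

theorem smul_le_of_stabilizerLex (h : stabilizerLex x r₀ g₁ g₂) : g₁ • x ≤ g₂ • x := by
  rcases h with ⟨hm, -⟩ | ⟨-, hlt⟩
  · exact (inv_mul_mem_stabilizer_iff.mp hm).le
  · exact hlt.le

theorem stabilizerLex_mul_left (hact : ∀ g : G, ∀ y z : E, y < z → g • y < g • z) (k : G)
    (h : stabilizerLex x r₀ g₁ g₂) : stabilizerLex x r₀ (k * g₁) (k * g₂) := by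
  have hcancel : (k * g₁)⁻¹ * (k * g₂) = g₁⁻¹ * g₂ := by group
  simpa only [stabilizerLex, hcancel, mul_smul] using h.imp_right (.imp_right (hact k _ _))

theorem mem_stabilizer_of_stabilizerLex {c₁ c₂ g : G} (hc₁ : c₁ ∈ stabilizer G x)
    (hc₂ : c₂ ∈ stabilizer G x) (h₁ : stabilizerLex x r₀ c₁ g) (h₂ : stabilizerLex x r₀ g c₂) :
    g ∈ stabilizer G x := by
  have hle₁ := smul_le_of_stabilizerLex h₁
  have hle₂ := smul_le_of_stabilizerLex h₂
  rw [mem_stabilizer_iff.mp hc₁] at hle₁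
  rw [mem_stabilizer_iff.mp hc₂] at hle₂
  exact le_antisymm hle₂ hle₁

variable [IsStrictTotalOrder (stabilizer G x) r₀]
  (h₀inv : ∀ k a b : stabilizer G x, r₀ a b → r₀ (k * a) (k * b))
include h₀inv

theorem stabilizerLex_trans (h₁₂ : stabilizerLex x r₀ g₁ g₂) (h₂₃ : stabilizerLex x r₀ g₂ g₃) :
    stabilizerLex x r₀ g₁ g₃ := by
  have le₁₂ := smul_le_of_stabilizerLex h₁₂
  have le₂₃ := smul_le_of_stabilizerLex h₂₃
  rcases (le₁₂.trans le₂₃).lt_or_eq with hlt | heq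
  · exact stabilizerLex_of_smul_lt hlt
  have hm₁₂ : g₁⁻¹ * g₂ ∈ stabilizer G x :=
    inv_mul_mem_stabilizer_iff.mpr (le_antisymm le₁₂ (heq ▸ le₂₃))
  have hm₂₃ : g₂⁻¹ * g₃ ∈ stabilizer G x :=
    inv_mul_mem_stabilizer_iff.mpr (le_antisymm le₂₃ (heq ▸ le₁₂))
  have hm₁₃ : g₁⁻¹ * g₃ ∈ stabilizer G x := inv_mul_mem_stabilizer_iff.mpr heq
  rw [stabilizerLex_iff_of_mem hm₁₂] at h₁₂
  rw [stabilizerLex_iff_of_mem hm₂₃] at h₂₃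
  rw [stabilizerLex_iff_of_mem hm₁₃]
  convert one_rel_mul h₀inv h₁₂ h₂₃ using 2
  simp [mul_assoc]

theorem stabilizerLex_trichotomous (g₁ g₂ : G) :
    stabilizerLex x r₀ g₁ g₂ ∨ g₁ = g₂ ∨ stabilizerLex x r₀ g₂ g₁ := by
  rcases lt_trichotomy (g₁ • x) (g₂ • x) with hlt | heq | hgt
  · exact .inl (stabilizerLex_of_smul_lt hlt)
  · have hm₁₂ : g₁⁻¹ * g₂ ∈ stabilizer G x := inv_mul_mem_stabilizer_iff.mpr heq
    have hm₂₁ : g₂⁻¹ * g₁ ∈ stabilizer G x := inv_mul_mem_stabilizer_iff.mpr heq.symm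
    rw [stabilizerLex_iff_of_mem hm₁₂, stabilizerLex_iff_of_mem hm₂₁]
    rcases trichotomous_of r₀ 1 ⟨_, hm₁₂⟩ with h | h | h
    · exact .inl h
    · exact .inr (.inl (inv_mul_eq_one.mp (congrArg Subtype.val h).symm))
    · refine .inr (.inr ?_)
      convert one_rel_inv_of_rel_one h₀inv h using 2
      simp
  · exact .inr (.inr (stabilizerLex_of_smul_lt hgt))

theorem isStrictTotalOrder_stabilizerLex : IsStrictTotalOrder G (stabilizerLex x r₀) where
  trichotomous a b h₁ h₂ :=
    ((stabilizerLex_trichotomous h₀inv a b).resolve_left h₁).resolve_right h₂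
  irrefl g h := by
    rw [stabilizerLex_iff_of_mem (by simp)] at h
    exact irrefl_of r₀ 1 (by convert h; simp)
  trans _ _ _ := stabilizerLex_trans h₀inv

end StabilizerLex

theorem order_from_stabilizer_general {G E : Type*} [Group G] [MulAction G E]
    [LinearOrder E] (hact : ∀ g : G, ∀ y z : E, y < z → g • y < g • z) (x : E)
    (r₀ : MulAction.stabilizer G x → MulAction.stabilizer G x → Prop)
    (h₀ : IsStrictTotalOrder (MulAction.stabilizer G x) r₀)
    (h₀inv : ∀ k a b : MulAction.stabilizer G x, r₀ a b → r₀ (k * a) (k * b)) :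
    ∃ R : G → G → Prop,
      (∀ g₁ g₂ : G, R g₁ g₂ ↔
        ((∃ h : g₁⁻¹ * g₂ ∈ MulAction.stabilizer G x, r₀ 1 ⟨g₁⁻¹ * g₂, h⟩) ∨
          (g₁⁻¹ * g₂ ∉ MulAction.stabilizer G x ∧ g₁ • x < g₂ • x))) ∧
      IsStrictTotalOrder G R ∧
      (∀ k g₁ g₂ : G, R g₁ g₂ → R (k * g₁) (k * g₂)) ∧
      (∀ c₁ ∈ MulAction.stabilizer G x, ∀ c₂ ∈ MulAction.stabilizer G x,
        ∀ g : G, R c₁ g → R g c₂ → g ∈ MulAction.stabilizer G x) := by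
  exact ⟨stabilizerLex x r₀, fun _ _ => Iff.rfl, isStrictTotalOrder_stabilizerLex h₀inv,
    fun k _ _ => stabilizerLex_mul_left hact k,
    fun _ hc₁ _ hc₂ _ => mem_stabilizer_of_stabilizerLex hc₁ hc₂⟩

/-- Order extension from a point stabilizer: if a nontrivial group `G` acts by
order-preserving bijections on a linear order `E`, `x ∈ E`, and `r₀` is a
left-invariant strict total order on `Stab(x)`, then the relation
`g₁ < g₂ ↔ (g₁⁻¹g₂ ∈ Stab(x) ∧ 1 <₀ g₁⁻¹g₂) ∨ (g₁⁻¹g₂ ∉ Stab(x) ∧ g₁·x < g₂·x)`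
is a left-invariant strict total order on `G`, and `Stab(x)` is convex. -/
theorem order_from_stabilizer {G E : Type*} [Group G] [Nontrivial G] [MulAction G E]
    [LinearOrder E] (hact : ∀ g : G, ∀ y z : E, y < z → g • y < g • z) (x : E)
    (r₀ : MulAction.stabilizer G x → MulAction.stabilizer G x → Prop)
    (h₀ : IsStrictTotalOrder (MulAction.stabilizer G x) r₀)
    (h₀inv : ∀ k a b : MulAction.stabilizer G x, r₀ a b → r₀ (k * a) (k * b)) :
    ∃ R : G → G → Prop,
      (∀ g₁ g₂ : G, R g₁ g₂ ↔
        ((∃ h : g₁⁻¹ * g₂ ∈ MulAction.stabilizer G x, r₀ 1 ⟨g₁⁻¹ * g₂, h⟩) ∨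
          (g₁⁻¹ * g₂ ∉ MulAction.stabilizer G x ∧ g₁ • x < g₂ • x))) ∧
      IsStrictTotalOrder G R ∧
      (∀ k g₁ g₂ : G, R g₁ g₂ → R (k * g₁) (k * g₂)) ∧
      (∀ c₁ ∈ MulAction.stabilizer G x, ∀ c₂ ∈ MulAction.stabilizer G x,
        ∀ g : G, R c₁ g → R g c₂ → g ∈ MulAction.stabilizer G x) :=
  order_from_stabilizer_general hact x r₀ h₀ h₀inv
end

section
/- An arbitrary intersection of relatively convex subgroups of a left-orderable group is relatively convex: if G is left-orderable and {Cᵢ} is a family of subgroups such that each Cᵢ is convex with respect to some left-order on G, then ⋂ᵢ Cᵢ is convex with respect to some left-order on G. -/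
/-- A subgroup is relatively convex if it is convex with respect to some left-order. -/
def IsRelativelyConvex {G : Type*} [Group G] (C : Subgroup G) : Prop :=
  ∃ P : Set G, IsLeftOrderCone P ∧ IsConeConvex P C

/-!
Well-order the index set and compare `g ∉ ⋂ᵢ Cᵢ` using the order `Pᵢ` for which `Cᵢ` is convex,
where `i` is the first index with `g ∉ Cᵢ`; elements of `⋂ᵢ Cᵢ` are compared by an arbitrary
left-order. This is a left-order because, for `C` convex with respect to `P`, the set `P \ C` is
closed under multiplication and under multiplication by `C` on either side.
-/

section LexCone

variable {G : Type*} [Group G]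

section ConeConvex

variable {P : Set G} {C : Subgroup G} {a b : G}

theorem IsLeftOrderCone.inv_mem_of_notMem_s11 (hP : IsLeftOrderCone P) (hg1 : a ≠ 1) (hg : a ∉ P) :
    a⁻¹ ∈ P :=
  (hP.2.2 a⁻¹ (inv_ne_one.mpr hg1)).mpr (by rwa [inv_inv])

theorem IsConeConvex.mul_mem_of_mem_left_s11 (hC : IsConeConvex P C) (hP : IsLeftOrderCone P)
    (ha : a ∈ C) (hbP : b ∈ P) (hbC : b ∉ C) : a * b ∈ P := by
  have habC : a * b ∉ C := fun h => hbC (by simpa using C.mul_mem (C.inv_mem ha) h)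
  by_contra habP
  have hinv := hP.inv_mem_of_notMem_s11 (by rintro h; exact habC (h ▸ C.one_mem)) habP
  exact habC (hC a ha 1 C.one_mem (a * b) (by simpa using hbP) (by simpa using hinv))

theorem IsConeConvex.mul_mem_of_mem_right_s11 (hC : IsConeConvex P C) (hP : IsLeftOrderCone P)
    (haP : a ∈ P) (haC : a ∉ C) (hb : b ∈ C) : a * b ∈ P := by
  have habC : a * b ∉ C := fun h => haC (by simpa using C.mul_mem h (C.inv_mem hb))
  by_contra habP
  have hinv := hP.inv_mem_of_notMem_s11 (by rintro h; exact habC (h ▸ C.one_mem)) habP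
  rw [mul_inv_rev] at hinv
  exact haC (C.inv_mem_iff.mp (hC b hb 1 C.one_mem a⁻¹ hinv (by simpa using haP)))

theorem IsConeConvex.mul_notMem (hC : IsConeConvex P C) (haP : a ∈ P) (haC : a ∉ C)
    (hbP : b ∈ P) : a * b ∉ C :=
  fun hab => haC (hC 1 C.one_mem (a * b) hab a (by simpa using haP) (by simpa using hbP))

end ConeConvex

section Lex

variable {ι : Type*} [LinearOrder ι] {C : ι → Subgroup G} {a b g : G} {i j : ι}

variable (C) in
def IsFirstNotMem (g : G) (i : ι) : Prop :=
  g ∉ C i ∧ ∀ k < i, g ∈ C k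

namespace IsFirstNotMem

theorem unique (hi : IsFirstNotMem C g i) (hj : IsFirstNotMem C g j) : i = j := by
  rcases lt_trichotomy i j with h | h | h
  · exact absurd (hj.2 i h) hi.1
  · exact h
  · exact absurd (hi.2 j h) hj.1

theorem notMem_iInf (hi : IsFirstNotMem C g i) : g ∉ ⨅ k, C k :=
  fun hg => hi.1 (Subgroup.mem_iInf.mp hg i)

theorem inv (hi : IsFirstNotMem C g i) : IsFirstNotMem C g⁻¹ i :=
  ⟨by simpa using hi.1, fun k hk => by simpa using hi.2 k hk⟩

theorem mul_left (ha : ∀ k ≤ i, a ∈ C k) (hb : IsFirstNotMem C b i) :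
    IsFirstNotMem C (a * b) i :=
  ⟨fun h => hb.1 (by simpa using (C i).mul_mem ((C i).inv_mem (ha i le_rfl)) h),
    fun k hk => (C k).mul_mem (ha k hk.le) (hb.2 k hk)⟩

theorem mul_right (ha : IsFirstNotMem C a i) (hb : ∀ k ≤ i, b ∈ C k) :
    IsFirstNotMem C (a * b) i :=
  ⟨fun h => ha.1 (by simpa using (C i).mul_mem h ((C i).inv_mem (hb i le_rfl))),
    fun k hk => (C k).mul_mem (ha.2 k hk) (hb k hk.le)⟩

end IsFirstNotMem

theorem exists_isFirstNotMem [WellFoundedLT ι] (hg : g ∉ ⨅ k, C k) :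
    ∃ i, IsFirstNotMem C g i := by
  obtain ⟨i, hi⟩ := not_forall.mp (mt Subgroup.mem_iInf.mpr hg)
  obtain ⟨j, hj, hmin⟩ := wellFounded_lt.has_min {k | g ∉ C k} ⟨i, hi⟩
  exact ⟨j, hj, fun k hk => by_contra fun hgk => hmin k hgk hk⟩

variable (C) in
def lexCone (P₀ : Set G) (P : ι → Set G) : Set G :=
  {g | g ∈ ⨅ k, C k ∧ g ∈ P₀ ∨ ∃ i, IsFirstNotMem C g i ∧ g ∈ P i}

variable {P₀ : Set G} {P : ι → Set G}

theorem mem_lexCone_of_mem_iInf (hg : g ∈ ⨅ k, C k) : g ∈ lexCone C P₀ P ↔ g ∈ P₀ := by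
  refine ⟨?_, fun h => .inl ⟨hg, h⟩⟩
  rintro (⟨-, h⟩ | ⟨i, hi, -⟩)
  · exact h
  · exact absurd hg hi.notMem_iInf

theorem mem_lexCone_of_isFirstNotMem (hi : IsFirstNotMem C g i) :
    g ∈ lexCone C P₀ P ↔ g ∈ P i := by
  refine ⟨?_, fun h => .inr ⟨i, hi, h⟩⟩
  rintro (⟨hg, -⟩ | ⟨j, hj, h⟩)
  · exact absurd hg hi.notMem_iInf
  · rwa [hi.unique hj]

theorem mul_mem_lexCone_of_le (hP : ∀ i, IsLeftOrderCone (P i))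
    (hC : ∀ i, IsConeConvex (P i) (C i)) (ha : IsFirstNotMem C a i) (haP : a ∈ P i)
    (hb : IsFirstNotMem C b j) (hbP : b ∈ P j) (hij : i ≤ j) : a * b ∈ lexCone C P₀ P := by
  rcases hij.lt_or_eq with hij | rfl
  · exact .inr ⟨i, ha.mul_right fun k hk => hb.2 k (hk.trans_lt hij),
      (hC i).mul_mem_of_mem_right_s11 (hP i) haP ha.1 (hb.2 i hij)⟩
  · exact .inr ⟨i, ⟨(hC i).mul_notMem haP ha.1 hbP,
      fun k hk => (C k).mul_mem (ha.2 k hk) (hb.2 k hk)⟩, (hP i).1 a haP b hbP⟩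

theorem mul_mem_lexCone_of_gt (hP : ∀ i, IsLeftOrderCone (P i))
    (hC : ∀ i, IsConeConvex (P i) (C i)) (ha : IsFirstNotMem C a i)
    (hb : IsFirstNotMem C b j) (hbP : b ∈ P j) (hji : j < i) : a * b ∈ lexCone C P₀ P :=
  .inr ⟨j, hb.mul_left fun k hk => ha.2 k (hk.trans_lt hji),
    (hC j).mul_mem_of_mem_left_s11 (hP j) (ha.2 j hji) hbP hb.1⟩

section WellFounded

variable [WellFoundedLT ι]

theorem isLeftOrderCone_lexCone (hP₀ : IsLeftOrderCone P₀) (hP : ∀ i, IsLeftOrderCone (P i))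
    (hC : ∀ i, IsConeConvex (P i) (C i)) : IsLeftOrderCone (lexCone C P₀ P) := by
  have mem_C {c : G} (hc : c ∈ ⨅ k, C k) (k : ι) : c ∈ C k := Subgroup.mem_iInf.mp hc k
  refine ⟨?_, ?_, fun g hg => ?_⟩
  · rintro a (⟨haD, haP⟩ | ⟨i, ha, haP⟩) b (⟨hbD, hbP⟩ | ⟨j, hb, hbP⟩)
    · exact .inl ⟨mul_mem haD hbD, hP₀.1 a haP b hbP⟩
    · exact .inr ⟨j, hb.mul_left fun k _ => mem_C haD k,
        (hC j).mul_mem_of_mem_left_s11 (hP j) (mem_C haD j) hbP hb.1⟩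
    · exact .inr ⟨i, ha.mul_right fun k _ => mem_C hbD k,
        (hC i).mul_mem_of_mem_right_s11 (hP i) haP ha.1 (mem_C hbD i)⟩
    · rcases le_or_gt i j with hij | hji
      · exact mul_mem_lexCone_of_le hP hC ha haP hb hbP hij
      · exact mul_mem_lexCone_of_gt hP hC ha hb hbP hji
  · rintro (⟨-, h⟩ | ⟨i, hi, -⟩)
    · exact hP₀.2.1 h
    · exact hi.1 (C i).one_mem
  · by_cases hgD : g ∈ ⨅ k, C k
    · rw [mem_lexCone_of_mem_iInf hgD, mem_lexCone_of_mem_iInf (inv_mem hgD)]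
      exact hP₀.2.2 g hg
    · obtain ⟨i, hi⟩ := exists_isFirstNotMem hgD
      rw [mem_lexCone_of_isFirstNotMem hi, mem_lexCone_of_isFirstNotMem hi.inv]
      exact (hP i).2.2 g hg

theorem isConeConvex_lexCone (hC : ∀ i, IsConeConvex (P i) (C i)) :
    IsConeConvex (lexCone C P₀ P) (⨅ k, C k) := by
  intro c₁ hc₁ c₂ hc₂ g h₁ h₂
  rw [Subgroup.mem_iInf] at hc₁ hc₂
  by_contra hgD
  obtain ⟨i, hi⟩ := exists_isFirstNotMem hgD
  have hi₁ : IsFirstNotMem C (c₁⁻¹ * g) i := hi.mul_left fun k _ => inv_mem (hc₁ k)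
  have hi₂ : IsFirstNotMem C (g⁻¹ * c₂) i := hi.inv.mul_right fun k _ => hc₂ k
  exact hi.1 (hC i c₁ (hc₁ i) c₂ (hc₂ i) g ((mem_lexCone_of_isFirstNotMem hi₁).mp h₁)
    ((mem_lexCone_of_isFirstNotMem hi₂).mp h₂))

theorem isRelativelyConvex_iInf_of_wellFoundedLT (hLO : ∃ P : Set G, IsLeftOrderCone P)
    (hC : ∀ i, IsRelativelyConvex (C i)) : IsRelativelyConvex (⨅ i, C i) := by
  obtain ⟨P₀, hP₀⟩ := hLO
  choose P hP hPC using hC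
  exact ⟨lexCone C P₀ P, isLeftOrderCone_lexCone hP₀ hP hPC, isConeConvex_lexCone hPC⟩

end WellFounded

end Lex

end LexCone

/-- An arbitrary intersection of relatively convex subgroups of a left-orderable
group is relatively convex. -/
theorem iInf_relatively_convex {G : Type*} [Group G]
    (hLO : ∃ P : Set G, IsLeftOrderCone P) {ι : Sort*} (C : ι → Subgroup G)
    (hC : ∀ i, IsRelativelyConvex (C i)) : IsRelativelyConvex (⨅ i, C i) := by
  obtain ⟨_, _⟩ := exists_wellFoundedLT (PLift ι)
  rw [← iInf_plift_down]
  exact isRelativelyConvex_iInf_of_wellFoundedLT hLO fun i => hC i.down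
end

section
/- For left-orders on ℤ², every element of the positive cone off a determining line of irrational slope is cofinal: let < be a left-invariant total order on ℤ² and suppose L ⊂ ℝ² is a line through the origin containing no nonzero lattice point, such that every lattice point on one side of L is positive and every lattice point on the other side is negative. Then for each nonzero v ∈ ℤ², the cyclic subgroup ⟨v⟩ is cofinal: for every w ∈ ℤ² there exist m, n ∈ ℤ with mv < w < nv. -/
/-!
The linear form `u ↦ a u₁ + b u₂` is an additive map `f : ℤ² → ℝ` with `f v ≠ 0` by
irrationality, so by the Archimedean property `f w` lies strictly between `m f(v) = f(m v)`
and `n f(v) = f(n v)`. Left invariance turns `f u < f w`, i.e. `0 < f(-u + w)`, into `u < w`.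
-/

theorem exists_zsmul_lt_and_lt_zsmul {α : Type*} [AddCommGroup α] [LinearOrder α]
    [IsOrderedAddMonoid α] [Archimedean α] {x : α} (hx : x ≠ 0) (y : α) :
    ∃ m n : ℤ, m • x < y ∧ y < n • x := by
  wlog hx_pos : 0 < x generalizing x
  · obtain ⟨m, n, hm, hn⟩ := this (neg_ne_zero.2 hx) (neg_pos.2 (hx.lt_of_le (not_lt.1 hx_pos)))
    exact ⟨-m, -n, by simpa using hm, by simpa using hn⟩
  obtain ⟨n, hn⟩ := exists_lt_nsmul hx_pos y
  obtain ⟨m, hm⟩ := exists_lt_nsmul hx_pos (-y)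
  exact ⟨-m, n, by simpa [neg_lt] using hm, by simpa using hn⟩

section LeftInvariant

variable {G α : Type*} [AddGroup G] [AddCommGroup α] [LinearOrder α] [IsOrderedAddMonoid α]
  {r : G → G → Prop} (hinv : ∀ k u v : G, r u v → r (k + u) (k + v)) (f : G →+ α)
  (hpos : ∀ u : G, 0 < f u → r 0 u)
include hinv hpos

theorem rel_of_map_lt {u w : G} (h : f u < f w) : r u w := by
  have h0 : r 0 (-u + w) := hpos _ (by simpa [add_comm] using h)
  simpa using hinv u _ _ h0

theorem exists_zsmul_rel_and_rel_zsmul [Archimedean α] {v : G} (hv : f v ≠ 0) (w : G) :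
    ∃ m n : ℤ, r (m • v) w ∧ r w (n • v) := by
  obtain ⟨m, n, hm, hn⟩ := exists_zsmul_lt_and_lt_zsmul hv (f w)
  exact ⟨m, n, rel_of_map_lt hinv f hpos (by simpa using hm),
    rel_of_map_lt hinv f hpos (by simpa using hn)⟩

end LeftInvariant

theorem cofinal_of_irrational_slope_general (r : ℤ × ℤ → ℤ × ℤ → Prop)
    (hinv : ∀ k u v : ℤ × ℤ, r u v → r (k + u) (k + v)) (a b : ℝ)
    (hirr : ∀ v : ℤ × ℤ, v ≠ 0 → a * (v.1 : ℝ) + b * (v.2 : ℝ) ≠ 0)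
    (hpos : ∀ v : ℤ × ℤ, 0 < a * (v.1 : ℝ) + b * (v.2 : ℝ) → r 0 v) :
    ∀ v : ℤ × ℤ, v ≠ 0 → ∀ w : ℤ × ℤ, ∃ m n : ℤ, r (m • v) w ∧ r w (n • v) := by
  let f : ℤ × ℤ →+ ℝ :=
    AddMonoidHom.mk' (fun u => a * (u.1 : ℝ) + b * (u.2 : ℝ)) fun u u' => by push_cast [Prod.fst_add, Prod.snd_add]; ring
  exact fun v hv => exists_zsmul_rel_and_rel_zsmul hinv f hpos (hirr v hv)

/-- For a left-order `r` on `ℤ²` whose determining line (through the origin, given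
by the equation `a·x + b·y = 0`) contains no nonzero lattice point — lattice points
on one side being positive and on the other side negative — every nonzero `v ∈ ℤ²`
generates a cofinal cyclic subgroup: every `w` lies between two multiples of `v`. -/
theorem cofinal_of_irrational_slope (r : ℤ × ℤ → ℤ × ℤ → Prop)
    (hord : IsStrictTotalOrder (ℤ × ℤ) r)
    (hinv : ∀ k u v : ℤ × ℤ, r u v → r (k + u) (k + v)) (a b : ℝ)
    (hab : (a, b) ≠ ((0 : ℝ), (0 : ℝ)))
    (hirr : ∀ v : ℤ × ℤ, v ≠ 0 → a * (v.1 : ℝ) + b * (v.2 : ℝ) ≠ 0)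
    (hpos : ∀ v : ℤ × ℤ, 0 < a * (v.1 : ℝ) + b * (v.2 : ℝ) → r 0 v)
    (hneg : ∀ v : ℤ × ℤ, a * (v.1 : ℝ) + b * (v.2 : ℝ) < 0 → r v 0) :
    ∀ v : ℤ × ℤ, v ≠ 0 → ∀ w : ℤ × ℤ, ∃ m n : ℤ, r (m • v) w ∧ r w (n • v) :=
  cofinal_of_irrational_slope_general r hinv a b hirr hpos
end

section
/- For a left-order < on ℤ² whose determining line has rational slope with L ∩ ℤ² = ⟨α⟩ (α primitive), the subgroup ⟨α⟩ is convex with respect to <. -/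
/-!
The sign of the linear form `v ↦ a v₁ + b v₂` decides the order between `v` and `0`, and by
translation invariance also between `v` and any point `c` of the kernel line: `v - c` has the
same sign as `v`. So a point strictly between two points of the line can lie on neither side.
-/

section SignCompatibleOrder

variable {G R : Type*} [AddGroup G] [AddGroup R] (f : G →+ R) (r : G → G → Prop)

theorem rel_of_map_eq_zero_of_pos [LT R]
    (hinv : ∀ k u v : G, r u v → r (k + u) (k + v)) (hpos : ∀ v : G, 0 < f v → r 0 v) {c g : G}
    (hc : f c = 0) (hg : 0 < f g) : r c g := by
  have h := hinv c 0 (-c + g) (hpos _ (by simpa [hc] using hg))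
  simpa using h

theorem rel_of_map_eq_zero_of_neg [LT R]
    (hinv : ∀ k u v : G, r u v → r (k + u) (k + v)) (hneg : ∀ v : G, f v < 0 → r v 0) {c g : G}
    (hc : f c = 0) (hg : f g < 0) : r g c := by
  have h := hinv c (-c + g) 0 (hneg _ (by simpa [hc] using hg))
  simpa using h

theorem map_eq_zero_of_rel_of_rel [LinearOrder R] [Std.Asymm r]
    (hinv : ∀ k u v : G, r u v → r (k + u) (k + v)) (hpos : ∀ v : G, 0 < f v → r 0 v)
    (hneg : ∀ v : G, f v < 0 → r v 0) {c₁ c₂ g : G} (hc₁ : f c₁ = 0) (hc₂ : f c₂ = 0)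
    (h₁ : r c₁ g) (h₂ : r g c₂) : f g = 0 := by
  rcases lt_trichotomy (f g) 0 with hlt | heq | hgt
  · exact absurd (rel_of_map_eq_zero_of_neg f r hinv hneg hc₁ hlt) (asymm h₁)
  · exact heq
  · exact absurd (rel_of_map_eq_zero_of_pos f r hinv hpos hc₂ hgt) (asymm h₂)

end SignCompatibleOrder

def linearFormIntProd (a b : ℝ) : ℤ × ℤ →+ ℝ :=
  AddMonoidHom.mk' (fun v => a * (v.1 : ℝ) + b * (v.2 : ℝ)) fun u v => by
    simp only [Prod.fst_add, Prod.snd_add, Int.cast_add]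
    ring

theorem rational_slope_line_subgroup_convex_general (r : ℤ × ℤ → ℤ × ℤ → Prop)
    (hord : IsStrictTotalOrder (ℤ × ℤ) r)
    (hinv : ∀ k u v : ℤ × ℤ, r u v → r (k + u) (k + v)) (a b : ℝ)
    (α : ℤ × ℤ)
    (hline : ∀ v : ℤ × ℤ, a * (v.1 : ℝ) + b * (v.2 : ℝ) = 0 ↔
      v ∈ AddSubgroup.zmultiples α)
    (hpos : ∀ v : ℤ × ℤ, 0 < a * (v.1 : ℝ) + b * (v.2 : ℝ) → r 0 v)
    (hneg : ∀ v : ℤ × ℤ, a * (v.1 : ℝ) + b * (v.2 : ℝ) < 0 → r v 0) :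
    ∀ c₁ ∈ AddSubgroup.zmultiples α, ∀ c₂ ∈ AddSubgroup.zmultiples α,
      ∀ g : ℤ × ℤ, r c₁ g → r g c₂ → g ∈ AddSubgroup.zmultiples α := by
  intro c₁ hc₁ c₂ hc₂ g h₁ h₂
  have := hord
  exact (hline g).mp <| map_eq_zero_of_rel_of_rel (linearFormIntProd a b) r hinv hpos hneg
    ((hline c₁).mpr hc₁) ((hline c₂).mpr hc₂) h₁ h₂

/-- For a left-order `r` on `ℤ²` whose determining line `L = {a·x + b·y = 0}`
has rational slope with `L ∩ ℤ² = ⟨α⟩` (`α` primitive), the subgroup `⟨α⟩` is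
convex with respect to `r`. -/
theorem rational_slope_line_subgroup_convex (r : ℤ × ℤ → ℤ × ℤ → Prop)
    (hord : IsStrictTotalOrder (ℤ × ℤ) r)
    (hinv : ∀ k u v : ℤ × ℤ, r u v → r (k + u) (k + v)) (a b : ℝ)
    (hab : (a, b) ≠ ((0 : ℝ), (0 : ℝ))) (α : ℤ × ℤ) (hα : α ≠ 0)
    (hprim : IsCoprime α.1 α.2)
    (hline : ∀ v : ℤ × ℤ, a * (v.1 : ℝ) + b * (v.2 : ℝ) = 0 ↔
      v ∈ AddSubgroup.zmultiples α)
    (hpos : ∀ v : ℤ × ℤ, 0 < a * (v.1 : ℝ) + b * (v.2 : ℝ) → r 0 v)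
    (hneg : ∀ v : ℤ × ℤ, a * (v.1 : ℝ) + b * (v.2 : ℝ) < 0 → r v 0) :
    ∀ c₁ ∈ AddSubgroup.zmultiples α, ∀ c₂ ∈ AddSubgroup.zmultiples α,
      ∀ g : ℤ × ℤ, r c₁ g → r g c₂ → g ∈ AddSubgroup.zmultiples α :=
  rational_slope_line_subgroup_convex_general r hord hinv a b α hline hpos hneg
end
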